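/- Let α > 1 and let T be the map on nonincreasing functions H : ℝ → [0,1] with H = 1 on (−∞, 0) given by (TH)(t) = exp(−∫_{−t}^∞ φH(z) dz) for t ≥ 0 and 1 for t < 0, where φH(t) = exp(−(1/α)∫_{−t}^∞ H(z) dz). Then the function G(t) = α/(1 + γ e^t) for t ≥ 0, G(t) = 1 for t < 0 (with γ = w_o e^{w_o}, w_o the positive root of w + e^{-w} = α) is a fixed point of T: TG = G. -/

import Mathlib

open MeasureTheory Set Filter Real

/-!
The function `z ↦ -log (1 + e^{-z} / c)` is an antiderivative of `(1 + c e^z)⁻¹` vanishing at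
`+∞`, so every integral involved is elementary. For `t ≥ 0` one gets
`∫_{-t}^∞ G = t + α log (1 + γ⁻¹)`, hence `φG t = e^{-t/α} / (1 + γ⁻¹)`, while
`φG t = (1 + γ⁻¹ e^t)⁻¹` for `t ≤ 0`. Integrating once more,
`TG t = (1 + γ) e^{-m} / (1 + γ e^t)` with `m = α / (1 + γ⁻¹)` the mass of `φG` on `[0, ∞)`;
the relations `γ = w e^w` and `w + e^{-w} = α` say precisely that `m = w` and
`(1 + γ) e^{-w} = α`.
-/

section LogisticIntegral

variable {c : ℝ}

lemma hasDerivAt_neg_log_one_add_exp_neg_div (hc : 0 < c) (z : ℝ) :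
    HasDerivAt (fun z => -log (1 + exp (-z) / c)) (1 + c * exp z)⁻¹ z := by
  have hexp : HasDerivAt (fun z => 1 + exp (-z) / c) (-exp (-z) / c) z := by
    simpa [neg_div] using (((hasDerivAt_neg z).exp).div_const c).const_add 1
  refine ((hexp.log (by positivity)).neg).congr_deriv ?_
  rw [exp_neg]
  field_simp
  ring

lemma tendsto_neg_log_one_add_exp_neg_div_atTop (c : ℝ) :
    Tendsto (fun z => -log (1 + exp (-z) / c)) atTop (nhds 0) := by
  have h : Tendsto (fun z => 1 + exp (-z) / c) atTop (nhds 1) := by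
    simpa using (tendsto_exp_neg_atTop_nhds_zero.div_const c).const_add 1
  simpa using ((continuousAt_log one_ne_zero).tendsto.comp h).neg

lemma integrableOn_Ioi_inv_one_add_mul_exp (hc : 0 < c) (s : ℝ) :
    IntegrableOn (fun z => (1 + c * exp z)⁻¹) (Ioi s) :=
  integrableOn_Ioi_deriv_of_nonneg' (fun z _ => hasDerivAt_neg_log_one_add_exp_neg_div hc z)
    (fun z _ => by positivity) (tendsto_neg_log_one_add_exp_neg_div_atTop c)

lemma integral_Ioi_inv_one_add_mul_exp (hc : 0 < c) (s : ℝ) :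
    ∫ z in Ioi s, (1 + c * exp z)⁻¹ = log (1 + exp (-s) / c) := by
  rw [integral_Ioi_of_hasDerivAt_of_nonneg'
    (fun z _ => hasDerivAt_neg_log_one_add_exp_neg_div hc z)
    (fun z _ => by positivity) (tendsto_neg_log_one_add_exp_neg_div_atTop c)]
  ring

lemma integral_inv_one_add_mul_exp (hc : 0 < c) (a b : ℝ) :
    ∫ z in a..b, (1 + c * exp z)⁻¹ = log (1 + exp (-a) / c) - log (1 + exp (-b) / c) := by
  rw [intervalIntegral.integral_eq_sub_of_hasDerivAt
    (fun z _ => hasDerivAt_neg_log_one_add_exp_neg_div hc z)]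
  · ring
  · have hpos (z : ℝ) : 1 + c * exp z ≠ 0 := by positivity
    exact ((continuous_const.add (continuous_const.mul continuous_exp)).inv₀ hpos
      ).intervalIntegrable a b

end LogisticIntegral

noncomputable def logisticProfile (α γ t : ℝ) : ℝ :=
  if 0 ≤ t then α / (1 + γ * exp t) else 1

noncomputable def phiMap (α : ℝ) (H : ℝ → ℝ) (t : ℝ) : ℝ :=
  exp (-(1 / α) * ∫ z in Ici (-t), H z)

section LogisticProfile

variable {α γ s t : ℝ}

lemma eqOn_logisticProfile_Ici (α γ : ℝ) :
    EqOn (logisticProfile α γ) (fun z => α * (1 + γ * exp z)⁻¹) (Ici 0) := fun z hz => by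
  simp [logisticProfile, show 0 ≤ z from hz, div_eq_mul_inv]

lemma integral_Ici_logisticProfile_of_nonneg (hγ : 0 < γ) (hs : 0 ≤ s) :
    ∫ z in Ici s, logisticProfile α γ z = α * log (1 + exp (-s) / γ) := by
  rw [setIntegral_congr_fun measurableSet_Ici
      ((eqOn_logisticProfile_Ici α γ).mono (Ici_subset_Ici.2 hs)),
    integral_Ici_eq_integral_Ioi, integral_const_mul, integral_Ioi_inv_one_add_mul_exp hγ]

lemma integrableOn_Ici_logisticProfile (α : ℝ) (hγ : 0 < γ) :
    IntegrableOn (logisticProfile α γ) (Ici 0) := by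
  refine IntegrableOn.congr_fun ?_ (eqOn_logisticProfile_Ici α γ).symm measurableSet_Ici
  rw [integrableOn_Ici_iff_integrableOn_Ioi]
  exact (integrableOn_Ioi_inv_one_add_mul_exp hγ 0).const_mul α

lemma integral_Ici_logisticProfile_of_nonpos (hγ : 0 < γ) (hs : s ≤ 0) :
    ∫ z in Ici s, logisticProfile α γ z = -s + α * log (1 + γ⁻¹) := by
  have hconst : EqOn (fun _ => 1) (logisticProfile α γ) (uIoo s 0) := fun z hz => by
    rw [uIoo_of_le hs] at hz
    simp [logisticProfile, hz.2]
  have hint : IntervalIntegrable (logisticProfile α γ) volume s 0 :=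
    intervalIntegrable_const.congr_uIoo hconst
  rw [integral_Ici_eq_integral_Ioi, ← intervalIntegral.integral_interval_add_Ioi' hint
    ((integrableOn_Ici_logisticProfile α hγ).mono_set Ioi_subset_Ici_self),
    ← intervalIntegral.integral_congr_uIoo hconst, ← integral_Ici_eq_integral_Ioi,
    integral_Ici_logisticProfile_of_nonneg hγ le_rfl]
  simp [div_eq_mul_inv]

lemma phiMap_logisticProfile_of_nonpos (hα : α ≠ 0) (hγ : 0 < γ) (ht : t ≤ 0) :
    phiMap α (logisticProfile α γ) t = (1 + γ⁻¹ * exp t)⁻¹ := by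
  rw [phiMap, integral_Ici_logisticProfile_of_nonneg hγ (neg_nonneg.2 ht), neg_neg,
    show -(1 / α) * (α * log (1 + exp t / γ)) = -log (1 + exp t / γ) by field_simp,
    exp_neg, exp_log (by positivity), div_eq_inv_mul]

lemma phiMap_logisticProfile_of_nonneg (hα : α ≠ 0) (hγ : 0 < γ) (ht : 0 ≤ t) :
    phiMap α (logisticProfile α γ) t = (1 + γ⁻¹)⁻¹ * exp (-α⁻¹ * t) := by
  rw [phiMap, integral_Ici_logisticProfile_of_nonpos hγ (neg_nonpos.2 ht), neg_neg,
    show -(1 / α) * (t + α * log (1 + γ⁻¹)) = -α⁻¹ * t + -log (1 + γ⁻¹) by field_simp; ring,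
    exp_add, exp_neg (log _), exp_log (by positivity), mul_comm]

lemma integral_Ici_phiMap_logisticProfile (hα : 0 < α) (hγ : 0 < γ) (ht : 0 ≤ t) :
    ∫ z in Ici (-t), phiMap α (logisticProfile α γ) z =
      log (1 + γ * exp t) - log (1 + γ) + α * (1 + γ⁻¹)⁻¹ := by
  have hleft :
      EqOn (phiMap α (logisticProfile α γ)) (fun z => (1 + γ⁻¹ * exp z)⁻¹) (uIcc (-t) 0) :=
    fun z hz => phiMap_logisticProfile_of_nonpos hα.ne' hγ (uIcc_of_le (neg_nonpos.2 ht) ▸ hz).2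
  have hright : EqOn (phiMap α (logisticProfile α γ))
      (fun z => (1 + γ⁻¹)⁻¹ * exp (-α⁻¹ * z)) (Ioi 0) :=
    fun z hz => phiMap_logisticProfile_of_nonneg hα.ne' hγ (le_of_lt hz)
  have hcont : Continuous fun z => (1 + γ⁻¹ * exp z)⁻¹ := by
    have hpos (z : ℝ) : 1 + γ⁻¹ * exp z ≠ 0 := by positivity
    exact (continuous_const.add (continuous_const.mul continuous_exp)).inv₀ hpos
  have hint_left : IntervalIntegrable (phiMap α (logisticProfile α γ)) volume (-t) 0 :=
    (intervalIntegrable_congr (hleft.symm.mono uIoc_subset_uIcc)).1 (hcont.intervalIntegrable _ _)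
  rw [integral_Ici_eq_integral_Ioi, ← intervalIntegral.integral_interval_add_Ioi' hint_left
    (IntegrableOn.congr_fun ((exp_neg_integrableOn_Ioi 0 (inv_pos.2 hα)).const_mul _)
      hright.symm measurableSet_Ioi),
    intervalIntegral.integral_congr hleft, setIntegral_congr_fun measurableSet_Ioi hright,
    integral_inv_one_add_mul_exp (inv_pos.2 hγ), integral_const_mul,
    integral_exp_mul_Ioi (neg_lt_zero.2 (inv_pos.2 hα))]
  simp only [neg_neg, neg_zero, mul_zero, exp_zero, div_inv_eq_mul, one_mul, neg_div_neg_eq,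
    mul_comm (exp t)]
  ring

end LogisticProfile

theorem G_fixed_point_general (α w γ : ℝ) (hw : 0 < w)
    (hwα : w + Real.exp (-w) = α) (hγ : γ = w * Real.exp w)
    (G : ℝ → ℝ)
    (hG : ∀ t : ℝ, G t = if 0 ≤ t then α / (1 + γ * Real.exp t) else 1)
    (φG : ℝ → ℝ)
    (hφG : ∀ t : ℝ, φG t = Real.exp (-(1 / α) * ∫ z in Set.Ici (-t), G z))
    (TG : ℝ → ℝ)
    (hTG : ∀ t : ℝ, TG t =
      if 0 ≤ t then Real.exp (-∫ z in Set.Ici (-t), φG z) else 1) :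
    TG = G := by
  have hα : 0 < α := hwα ▸ by positivity
  have hγ0 : 0 < γ := hγ ▸ by positivity
  have hmass : α * (1 + γ⁻¹)⁻¹ = w := by
    rw [← hwα, hγ, exp_neg]
    field_simp
  have hscale : (1 + γ) * exp (-w) = α := by
    rw [← hwα, hγ, exp_neg]
    field_simp
    ring
  obtain rfl : G = logisticProfile α γ := funext hG
  obtain rfl : φG = phiMap α (logisticProfile α γ) := funext hφG
  funext t
  rw [hTG, logisticProfile]
  split_ifs with ht
  · rw [integral_Ici_phiMap_logisticProfile hα hγ0 ht, hmass, ← hscale,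
      show -(log (1 + γ * exp t) - log (1 + γ) + w) =
        log (1 + γ) - log (1 + γ * exp t) + -w by ring,
      exp_add, exp_sub, exp_log (by positivity), exp_log (by positivity)]
    ring
  · rfl

theorem G_fixed_point (α w γ : ℝ) (hα : 1 < α) (hw : 0 < w)
    (hwα : w + Real.exp (-w) = α) (hγ : γ = w * Real.exp w)
    (G : ℝ → ℝ)
    (hG : ∀ t : ℝ, G t = if 0 ≤ t then α / (1 + γ * Real.exp t) else 1)
    (φG : ℝ → ℝ)
    (hφG : ∀ t : ℝ, φG t = Real.exp (-(1 / α) * ∫ z in Set.Ici (-t), G z))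
    (TG : ℝ → ℝ)
    (hTG : ∀ t : ℝ, TG t =
      if 0 ≤ t then Real.exp (-∫ z in Set.Ici (-t), φG z) else 1) :
    TG = G :=
  G_fixed_point_general α w γ hw hwα hγ G hG φG hφG TG hTG
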